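/- arXiv:2508.19360 — 4 statements merged into one kernel-verified Lean document; each statement's English description precedes it below -/
import Mathlib

section
/- In the monoid M_n presented by generators e_1,...,e_{n-1}, \tau with relations e_i^2 = \tau e_i, e_i\tau = \tau e_i, e_i e_j = e_j e_i for |i-j| > 1, and e_i e_{i\pm 1} e_i = e_i, if a word w is reduced (not equal in M_n to any word with strictly fewer occurrences of the generators e_1,...,e_{n-1}) and is not a power of \tau, then the generator of maximal index occurring in w occurs exactly once. -/
/-- Generators of the Temperley–Lieb monoid `M n`: `Sum.inl i` is the generator
`e_{i+1}` (for `i : Fin (n-1)`, so `e_1, …, e_{n-1}`) and `Sum.inr ()` is `τ`. -/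
abbrev TLGen (n : ℕ) := Sum (Fin (n - 1)) Unit

/-- `τ` as a letter. -/
abbrev tau (n : ℕ) : TLGen n := Sum.inr ()

/-- The defining relations of the monoid `M n`:
`e_i e_i = τ e_i`, `e_i τ = τ e_i`, `e_i e_j = e_j e_i` for `|i-j| > 1`, and
`e_i e_{i±1} e_i = e_i`. -/
inductive TLRel (n : ℕ) : List (TLGen n) → List (TLGen n) → Prop
  | square (i : Fin (n - 1)) :
      TLRel n [Sum.inl i, Sum.inl i] [tau n, Sum.inl i]
  | commTau (i : Fin (n - 1)) :
      TLRel n [Sum.inl i, tau n] [tau n, Sum.inl i]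
  | comm (i j : Fin (n - 1)) (h : (i : ℕ) + 1 < j ∨ (j : ℕ) + 1 < i) :
      TLRel n [Sum.inl i, Sum.inl j] [Sum.inl j, Sum.inl i]
  | braid (i j : Fin (n - 1)) (h : (i : ℕ) = j + 1 ∨ (j : ℕ) = i + 1) :
      TLRel n [Sum.inl i, Sum.inl j, Sum.inl i] [Sum.inl i]

/-- One application of a defining relation inside an arbitrary context. -/
def TLStep (n : ℕ) (x y : List (TLGen n)) : Prop :=
  ∃ u v a b, TLRel n a b ∧ x = u ++ a ++ v ∧ y = u ++ b ++ v

/-- Equality in the presented monoid `M n`: the equivalence relation generated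
by applying the defining relations in arbitrary contexts. -/
def TLEq (n : ℕ) : List (TLGen n) → List (TLGen n) → Prop :=
  Relation.EqvGen (TLStep n)

/-- The number of occurrences of the generators `e_1, …, e_{n-1}` in a word. -/
def eCount {n : ℕ} (w : List (TLGen n)) : ℕ := (w.filter fun x => x.isLeft).length

/-!
Take two consecutive occurrences of the maximal generator `e_m`; every letter between them is
`τ` or some `e_j` with `j < m`. If `e_{m-1}` does not occur between them, `e_m` commutes past
all of these letters and `e_m e_m = τ e_m` saves a letter. Otherwise, since subwords of reduced
words are reduced, induction on `m` shows that `e_{m-1}` occurs there exactly once; everything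
else commutes with `e_m`, and `e_m e_{m-1} e_m = e_m` saves two letters.
-/

/-- `List.count` on words uses the derived `BEq` of `Sum`, which is not known to be lawful. -/
instance Sum.instLawfulBEqOfLawful {α β : Type*} [BEq α] [LawfulBEq α] [BEq β] [LawfulBEq β] :
    LawfulBEq (α ⊕ β) where
  eq_of_beq {a b} h := by
    cases a <;> cases b <;> first
      | exact congrArg _ (eq_of_beq (α := α) h) | exact congrArg _ (eq_of_beq (α := β) h)
      | exact absurd h Bool.false_ne_true
  rfl {a} := by
    cases a
    · exact beq_self_eq_true (α := α) _
    · exact beq_self_eq_true (α := β) _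

namespace List

variable {α : Type*} [BEq α] [LawfulBEq α] {a : α} {l : List α}

theorem exists_eq_append_cons_of_count_eq_one (h : l.count a = 1) :
    ∃ p q, l = p ++ a :: q ∧ a ∉ p ∧ a ∉ q := by
  obtain ⟨p, q, rfl⟩ := append_of_mem (count_pos_iff (a := a) (l := l) |>.mp (by omega))
  simp only [count_append, count_cons_self] at h
  exact ⟨p, q, rfl, count_eq_zero.mp (by omega), count_eq_zero.mp (by omega)⟩

theorem exists_eq_append_cons_append_cons_of_two_le_count (h : 2 ≤ l.count a) :
    ∃ u y v, l = u ++ a :: (y ++ a :: v) ∧ a ∉ y := by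
  induction l with
  | nil => simp at h
  | cons b l ih =>
    by_cases hl : 2 ≤ l.count a
    · obtain ⟨u, y, v, rfl, hy⟩ := ih hl
      exact ⟨b :: u, y, v, rfl, hy⟩
    · have hb : b = a := by
        by_contra hb
        simp [hb] at h
        omega
      subst hb
      obtain ⟨y, v, rfl, hy, -⟩ := exists_eq_append_cons_of_count_eq_one (l := l) (a := b)
        (by simp only [count_cons_self] at h; omega)
      exact ⟨[], y, v, rfl, hy⟩

end List

namespace TLEq

variable {n : ℕ} {a b c : List (TLGen n)}

theorem refl (a : List (TLGen n)) : TLEq n a a := Relation.EqvGen.refl a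

theorem symm (h : TLEq n a b) : TLEq n b a := Relation.EqvGen.symm _ _ h

theorem trans (h₁ : TLEq n a b) (h₂ : TLEq n b c) : TLEq n a c :=
  Relation.EqvGen.trans _ _ _ h₁ h₂

instance : Trans (TLEq n) (TLEq n) (TLEq n) := ⟨trans⟩

theorem of_rel (h : TLRel n a b) : TLEq n a b :=
  Relation.EqvGen.rel _ _ ⟨[], [], a, b, h, by simp, by simp⟩

theorem append_append (u v : List (TLGen n)) (h : TLEq n a b) :
    TLEq n (u ++ a ++ v) (u ++ b ++ v) := by
  induction h with
  | rel x y h =>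
    obtain ⟨p, q, x', y', hr, rfl, rfl⟩ := h
    exact Relation.EqvGen.rel _ _ ⟨u ++ p, q ++ v, x', y', hr, by simp, by simp⟩
  | refl x => exact refl _
  | symm x y _ ih => exact ih.symm
  | trans x y z _ _ ih₁ ih₂ => exact ih₁.trans ih₂

theorem swap_inl_of_index_add_one_lt (m : Fin (n - 1)) (c : TLGen n)
    (h : ∀ j : Fin (n - 1), c = Sum.inl j → (j : ℕ) + 1 < m) :
    TLEq n [Sum.inl m, c] [c, Sum.inl m] :=
  match c with
  | Sum.inr () => of_rel (TLRel.commTau m)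
  | Sum.inl j => of_rel (TLRel.comm m j (Or.inr (h j rfl)))

theorem cons_append_singleton {x : TLGen n} {y : List (TLGen n)}
    (h : ∀ c ∈ y, TLEq n [x, c] [c, x]) : TLEq n (x :: y) (y ++ [x]) := by
  induction y with
  | nil => exact refl _
  | cons c y ih =>
    calc TLEq n (x :: c :: y) (c :: x :: y) := by
          simpa using append_append [] y (h c List.mem_cons_self)
      TLEq n _ ((c :: y) ++ [x]) := by
          simpa using append_append [c] [] (ih fun d hd => h d (List.mem_cons_of_mem _ hd))

end TLEq

def TLReduced (n : ℕ) (w : List (TLGen n)) : Prop :=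
  ∀ v, TLEq n w v → eCount w ≤ eCount v

section Reduced

variable {n : ℕ}

@[simp]
theorem eCount_nil : eCount ([] : List (TLGen n)) = 0 := rfl

@[simp]
theorem eCount_cons_inl (j : Fin (n - 1)) (a : List (TLGen n)) :
    eCount (Sum.inl j :: a) = eCount a + 1 := by
  simp [eCount, List.filter_cons]

@[simp]
theorem eCount_cons_inr (u : Unit) (a : List (TLGen n)) : eCount (Sum.inr u :: a) = eCount a := by
  simp [eCount]

@[simp]
theorem eCount_append (a b : List (TLGen n)) : eCount (a ++ b) = eCount a + eCount b := by
  simp [eCount]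

theorem TLReduced.of_isInfix {w x : List (TLGen n)} (hw : TLReduced n w) (h : x <:+: w) :
    TLReduced n x := by
  obtain ⟨u, v, rfl⟩ := h
  intro x' hx'
  have := hw _ (hx'.append_append u v)
  simp only [eCount_append] at this
  omega

theorem not_tlReduced_square_of_commute {i : Fin (n - 1)} {y : List (TLGen n)}
    (hy : ∀ c ∈ y, TLEq n [Sum.inl i, c] [c, Sum.inl i]) :
    ¬TLReduced n (Sum.inl i :: y ++ [Sum.inl i]) := by
  intro hred
  have h : TLEq n (Sum.inl i :: y ++ [Sum.inl i]) (y ++ [tau n, Sum.inl i]) :=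
    calc TLEq n (Sum.inl i :: y ++ [Sum.inl i]) (y ++ [Sum.inl i, Sum.inl i]) := by
          simpa using (TLEq.cons_append_singleton hy).append_append [] [Sum.inl i]
      TLEq n _ (y ++ [tau n, Sum.inl i]) := by
          simpa using (TLEq.of_rel (TLRel.square i)).append_append y []
  have := hred _ h
  simp at this

theorem not_tlReduced_braid_of_commute {i j : Fin (n - 1)} {p q : List (TLGen n)}
    (hij : (i : ℕ) = j + 1 ∨ (j : ℕ) = i + 1)
    (hp : ∀ c ∈ p, TLEq n [Sum.inl i, c] [c, Sum.inl i])
    (hq : ∀ c ∈ q, TLEq n [Sum.inl i, c] [c, Sum.inl i]) :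
    ¬TLReduced n (Sum.inl i :: (p ++ Sum.inl j :: q) ++ [Sum.inl i]) := by
  intro hred
  have h : TLEq n (Sum.inl i :: (p ++ Sum.inl j :: q) ++ [Sum.inl i]) (p ++ Sum.inl i :: q) :=
    calc TLEq n (Sum.inl i :: (p ++ Sum.inl j :: q) ++ [Sum.inl i])
          (p ++ Sum.inl i :: Sum.inl j :: (q ++ [Sum.inl i])) := by
          simpa using
            (TLEq.cons_append_singleton hp).append_append [] (Sum.inl j :: (q ++ [Sum.inl i]))
      TLEq n _ (p ++ Sum.inl i :: Sum.inl j :: Sum.inl i :: q) := by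
          have hq' := (TLEq.cons_append_singleton hq).symm.append_append
            (p ++ [Sum.inl i, Sum.inl j]) []
          simp at hq'
          exact hq'
      TLEq n _ (p ++ Sum.inl i :: q) := by
          simpa using (TLEq.of_rel (TLRel.braid i j hij)).append_append p q
  have := hred _ h
  simp at this

theorem TLReduced.count_le_one {m : Fin (n - 1)} {x : List (TLGen n)} (hx : TLReduced n x)
    (hmax : ∀ j : Fin (n - 1), Sum.inl j ∈ x → j ≤ m) : x.count (Sum.inl m) ≤ 1 := by
  induction m using WellFoundedLT.induction generalizing x with | _ m ih => ?_
  by_contra! h2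
  obtain ⟨u, y, v, rfl, hmy⟩ := List.exists_eq_append_cons_append_cons_of_two_le_count h2
  have hsand : TLReduced n (Sum.inl m :: y ++ [Sum.inl m]) := hx.of_isInfix ⟨u, v, by simp⟩
  have hlt : ∀ j : Fin (n - 1), Sum.inl j ∈ y → j < m := fun j hj =>
    lt_of_le_of_ne (hmax j (by simp [hj])) (by rintro rfl; exact hmy hj)
  have hswap : ∀ c ∈ y, (∀ j : Fin (n - 1), c = Sum.inl j → (j : ℕ) + 1 ≠ m) →
      TLEq n [Sum.inl m, c] [c, Sum.inl m] := by
    rintro c hc hne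
    refine TLEq.swap_inl_of_index_add_one_lt m c fun j hcj => ?_
    have := Fin.lt_def.mp (hlt j (hcj ▸ hc))
    have := hne j hcj
    omega
  by_cases hpred : ∃ j : Fin (n - 1), Sum.inl j ∈ y ∧ (j : ℕ) + 1 = m
  · obtain ⟨j, hjy, hjm⟩ := hpred
    have hcount : y.count (Sum.inl j) = 1 :=
      le_antisymm
        (ih j (Fin.lt_def.mpr (by omega)) (hsand.of_isInfix ⟨[Sum.inl m], [Sum.inl m], by simp⟩)
          fun i hi => Fin.le_def.mpr (by have := Fin.lt_def.mp (hlt i hi); omega))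
        (List.count_pos_iff.mpr hjy)
    obtain ⟨p, q, rfl, hp, hq⟩ := List.exists_eq_append_cons_of_count_eq_one hcount
    have hsucc_eq : ∀ i : Fin (n - 1), (i : ℕ) + 1 = m → i = j :=
      fun i hi => Fin.ext (by omega)
    refine not_tlReduced_braid_of_commute (Or.inl hjm.symm) (fun c hc => ?_) (fun c hc => ?_) hsand
    · exact hswap c (by simp [hc]) fun i hci hi => hp (hsucc_eq i hi ▸ hci ▸ hc)
    · exact hswap c (by simp [hc]) fun i hci hi => hq (hsucc_eq i hi ▸ hci ▸ hc)
  · push Not at hpred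
    exact not_tlReduced_square_of_commute
      (fun c hc => hswap c hc fun j hcj => hpred j (hcj ▸ hc)) hsand

end Reduced

/-- In the monoid `M n`, if a word `w` is reduced (no word equal to it in `M n`
uses strictly fewer occurrences of the `e_i`) and is not a power of `τ`
(it contains some `e_m`), then the generator of maximal index occurring in `w`
occurs exactly once. -/
theorem reduced_max_index_occurs_once (n : ℕ) (w : List (TLGen n))
    (hred : ∀ v, TLEq n w v → eCount w ≤ eCount v)
    (m : Fin (n - 1)) (hm : Sum.inl m ∈ w)
    (hmax : ∀ j : Fin (n - 1), Sum.inl j ∈ w → j ≤ m) :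
    w.count (Sum.inl m) = 1 :=
  le_antisymm (TLReduced.count_le_one hred hmax) (List.count_pos_iff.mpr hm)
end

section
/- Each n-diagram in Jones normal form is uniquely determined by its normal form expression: if (E_{i_1}...E_{j_1})...(E_{i_r}...E_{j_r}) = (E_{i_1'}...E_{j_1'})...(E_{i_s'}...E_{j_s'}) as Temperley-Lieb diagrams, with i_1 < ... < i_r, j_1 < ... < j_r, i_1' < ... < i_s', j_1' < ... < j_s', then r = s and i_k = i_k', j_k = j_k' for all k. -/
/-!
A diagram is encoded by its matching, a fixed-point-free involution of the boundary points.
Stacking `E_i` below a diagram acts on matchings by the explicit map `eMul`, and `comp` agrees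
with it because the strand of `eMul` through a point of the three-layer picture is constant
along links.

The first run `E_{i₁} ⋯ E_{j₁}` of a normal form can be read off its matching: `i₁ + 1` is the
smallest right end of a cap on the bottom (a bottom point other than the `i_k + 1` is always
matched to its right), and `j₁` is the smallest bottom point not joined to the top point above
it. Knowing `i₁`, the rest of the word matches the point `i₁` in a known way, which allows one
to cancel the leading `E_{i₁}`; induction on the length of the word finishes the proof.
-/

namespace TLDiag

variable (n : ℕ)

/-- Boundary points of an `n`-diagram: `Sum.inl` are the `n` bottom points,
`Sum.inr` the `n` top points. A diagram is a (symmetric) relation recording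
which boundary points are connected by a link. -/
abbrev Bdry := Sum (Fin n) (Fin n)

/-- The generator diagram `E_{i+1}` (for `i : Fin (n-1)`): a cap joining bottom
points `i, i+1`, a cup joining top points `i, i+1`, and straight links
elsewhere. -/
def EDiag (i : Fin (n - 1)) (x y : Bdry n) : Prop :=
  let a : Fin n := ⟨(i : ℕ), lt_of_lt_of_le i.isLt (Nat.sub_le n 1)⟩
  let b : Fin n := ⟨(i : ℕ) + 1, by have := i.isLt; omega⟩
  (x = Sum.inl a ∧ y = Sum.inl b) ∨ (x = Sum.inl b ∧ y = Sum.inl a) ∨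
  (x = Sum.inr a ∧ y = Sum.inr b) ∨ (x = Sum.inr b ∧ y = Sum.inr a) ∨
  (∃ j : Fin n, j ≠ a ∧ j ≠ b ∧
    ((x = Sum.inl j ∧ y = Sum.inr j) ∨ (x = Sum.inr j ∧ y = Sum.inl j)))

/-- The identity diagram: straight links only. -/
def IdDiag (x y : Bdry n) : Prop :=
  ∃ j : Fin n, (x = Sum.inl j ∧ y = Sum.inr j) ∨ (x = Sum.inr j ∧ y = Sum.inl j)

/-- Vertical stacking of two diagrams `D₁` (below) and `D₂` (above): two outer
boundary points are linked in the product iff they are connected by a chain of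
links of `D₁` and `D₂` through the identified middle points. The three layers
(bottom, middle, top) are encoded in `Fin n ⊕ (Fin n ⊕ Fin n)`. -/
def comp (D₁ D₂ : Bdry n → Bdry n → Prop) (x y : Bdry n) : Prop :=
  let emb₁ : Bdry n → Sum (Fin n) (Bdry n) :=
    Sum.elim Sum.inl (fun k => Sum.inr (Sum.inl k))
  let emb₂ : Bdry n → Sum (Fin n) (Bdry n) :=
    Sum.elim (fun k => Sum.inr (Sum.inl k)) (fun k => Sum.inr (Sum.inr k))
  let embOut : Bdry n → Sum (Fin n) (Bdry n) :=
    Sum.elim Sum.inl (fun k => Sum.inr (Sum.inr k))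
  let step : Sum (Fin n) (Bdry n) → Sum (Fin n) (Bdry n) → Prop := fun p q =>
    (∃ a b, D₁ a b ∧ p = emb₁ a ∧ q = emb₁ b) ∨
    (∃ a b, D₂ a b ∧ p = emb₂ a ∧ q = emb₂ b)
  x ≠ y ∧ Relation.EqvGen step (embOut x) (embOut y)

/-- The diagram of a word in the generators `E_i`, multiplied by stacking. -/
def wordDiag : List (Fin (n - 1)) → Bdry n → Bdry n → Prop
  | [] => IdDiag n
  | i :: l => comp n (EDiag n i) (wordDiag l)

/-- The word `(E_{i_1} ⋯ E_{j_1}) ⋯ (E_{i_r} ⋯ E_{j_r})` of a Jones normal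
form, where each factor is the decreasing run from `I k` down to `J k`. -/
def jnfWord {r : ℕ} (I J : Fin r → Fin (n - 1)) : List (Fin (n - 1)) :=
  (List.ofFn fun k : Fin r =>
    (List.range ((I k : ℕ) - (J k : ℕ) + 1)).map fun t =>
      (⟨(I k : ℕ) - t, lt_of_le_of_lt (Nat.sub_le _ _) (I k).isLt⟩ : Fin (n - 1))).flatten

section Matching

variable {n : ℕ}

def lo (i : Fin (n - 1)) : Fin n := ⟨i, lt_of_lt_of_le i.isLt (Nat.sub_le n 1)⟩

def hi (i : Fin (n - 1)) : Fin n := ⟨i + 1, by have := i.isLt; omega⟩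

@[simp] theorem val_lo (i : Fin (n - 1)) : (lo i : ℕ) = i := rfl

@[simp] theorem val_hi (i : Fin (n - 1)) : (hi i : ℕ) = i + 1 := rfl

theorem lo_lt_hi (i : Fin (n - 1)) : lo i < hi i := Fin.lt_def.2 (Nat.lt_succ_self _)

theorem lo_ne_hi (i : Fin (n - 1)) : lo i ≠ hi i := (lo_lt_hi i).ne

variable (i : Fin (n - 1)) (g : Bdry n → Bdry n)

def followCup (z : Bdry n) : Bdry n :=
  if z = .inl (lo i) then g (.inl (hi i))
  else if z = .inl (hi i) then g (.inl (lo i)) else z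

/-- The matching of `E_i` stacked below a diagram with matching `g`: a strand of `g` that comes
down to the cup of `E_i` runs around it and back up into `g`. -/
def eMul (x : Bdry n) : Bdry n :=
  if x = .inl (lo i) then .inl (hi i)
  else if x = .inl (hi i) then .inl (lo i) else followCup i g (g x)

variable {i g}

@[simp] theorem followCup_lo : followCup i g (.inl (lo i)) = g (.inl (hi i)) := by
  simp [followCup]

@[simp] theorem followCup_hi : followCup i g (.inl (hi i)) = g (.inl (lo i)) := by
  simp [followCup, (lo_ne_hi i).symm]

@[simp] theorem followCup_inr (m : Fin n) : followCup i g (.inr m) = .inr m := by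
  simp [followCup]

theorem followCup_of_ne {z : Bdry n} (hlo : z ≠ .inl (lo i)) (hhi : z ≠ .inl (hi i)) :
    followCup i g z = z := by
  simp [followCup, hlo, hhi]

@[simp] theorem eMul_lo : eMul i g (.inl (lo i)) = .inl (hi i) := by simp [eMul]

@[simp] theorem eMul_hi : eMul i g (.inl (hi i)) = .inl (lo i) := by
  simp [eMul, (lo_ne_hi i).symm]

theorem eMul_of_ne {x : Bdry n} (hlo : x ≠ .inl (lo i)) (hhi : x ≠ .inl (hi i)) :
    eMul i g x = followCup i g (g x) := by
  simp [eMul, hlo, hhi]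

theorem eMul_of_ne_of_ne {x : Bdry n} (hlo : x ≠ .inl (lo i)) (hhi : x ≠ .inl (hi i))
    (hglo : g x ≠ .inl (lo i)) (hghi : g x ≠ .inl (hi i)) : eMul i g x = g x := by
  rw [eMul_of_ne hlo hhi, followCup_of_ne hglo hghi]

theorem followCup_apply_lo (hf : ∀ x, g x ≠ x) :
    followCup i g (g (.inl (lo i))) = g (.inl (lo i)) := by
  by_cases h : g (.inl (lo i)) = .inl (hi i)
  · rw [h, followCup_hi, h]
  · exact followCup_of_ne (hf _) h

theorem followCup_apply_hi (hf : ∀ x, g x ≠ x) :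
    followCup i g (g (.inl (hi i))) = g (.inl (hi i)) := by
  by_cases h : g (.inl (hi i)) = .inl (lo i)
  · rw [h, followCup_lo, h]
  · exact followCup_of_ne h (hf _)

variable (i g) in
def strand (x : Bdry n) : Sym2 (Bdry n) := s(x, eMul i g x)

theorem eq_or_eq_eMul_of_strand_eq {x y : Bdry n} (h : strand i g x = strand i g y) :
    y = x ∨ y = eMul i g x := by
  rcases Sym2.eq_iff.1 h with ⟨hxy, -⟩ | ⟨-, hy⟩
  · exact Or.inl hxy.symm
  · exact Or.inr hy.symm

variable (hg : Function.Involutive g) (hf : ∀ x, g x ≠ x)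
include hg hf

theorem eMul_followCup_apply {x : Bdry n} (hlo : x ≠ .inl (lo i)) (hhi : x ≠ .inl (hi i)) :
    eMul i g (followCup i g (g x)) = x := by
  by_cases hglo : g x = .inl (lo i)
  · have hx : g (.inl (lo i)) = x := by rw [← hglo, hg]
    have hylo : g (.inl (hi i)) ≠ .inl (lo i) := fun h => hhi (by rw [← hx, ← h, hg])
    rw [hglo, followCup_lo, eMul_of_ne hylo (hf _), hg, followCup_hi, hx]
  by_cases hghi : g x = .inl (hi i)
  · have hx : g (.inl (hi i)) = x := by rw [← hghi, hg]
    have hyhi : g (.inl (lo i)) ≠ .inl (hi i) := fun h => hlo (by rw [← hx, ← h, hg])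
    rw [hghi, followCup_hi, eMul_of_ne (hf _) hyhi, hg, followCup_lo, hx]
  rw [followCup_of_ne hglo hghi, eMul_of_ne hglo hghi, hg, followCup_of_ne hlo hhi]

theorem eMul_involutive : Function.Involutive (eMul i g) := by
  intro x
  by_cases hlo : x = .inl (lo i)
  · simp [hlo]
  by_cases hhi : x = .inl (hi i)
  · simp [hhi]
  rw [eMul_of_ne hlo hhi, eMul_followCup_apply hg hf hlo hhi]

theorem eMul_ne_self (x : Bdry n) : eMul i g x ≠ x := by
  by_cases hlo : x = .inl (lo i)
  · simp [hlo, (lo_ne_hi i).symm]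
  by_cases hhi : x = .inl (hi i)
  · simp [hhi, lo_ne_hi i]
  rw [eMul_of_ne hlo hhi]
  by_cases hglo : g x = .inl (lo i)
  · rw [hglo, followCup_lo]
    intro h
    rw [← h, hg] at hglo
    exact lo_ne_hi i (Sum.inl_injective hglo).symm
  by_cases hghi : g x = .inl (hi i)
  · rw [hghi, followCup_hi]
    intro h
    rw [← h, hg] at hghi
    exact lo_ne_hi i (Sum.inl_injective hghi)
  rw [followCup_of_ne hglo hghi]
  exact hf x

theorem strand_eMul (x : Bdry n) : strand i g (eMul i g x) = strand i g x := by
  rw [strand, strand, eMul_involutive hg hf x, Sym2.eq_swap]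

theorem strand_cup : strand i g (g (.inl (hi i))) = strand i g (g (.inl (lo i))) := by
  by_cases hc : g (.inl (lo i)) = .inl (hi i)
  · have hc' : g (.inl (hi i)) = .inl (lo i) := by rw [← hc, hg]
    rw [hc, hc', ← strand_eMul hg hf, eMul_lo]
  · have h : eMul i g (g (.inl (lo i))) = g (.inl (hi i)) := by
      rw [eMul_of_ne (hf _) hc, hg, followCup_lo]
    rw [← h, strand_eMul hg hf]

theorem strand_followCup_apply (u : Bdry n) :
    strand i g (followCup i g u) = strand i g (followCup i g (g u)) := by
  by_cases hlo : u = .inl (lo i)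
  · rw [hlo, followCup_lo, followCup_apply_lo hf, strand_cup hg hf]
  by_cases hhi : u = .inl (hi i)
  · rw [hhi, followCup_hi, followCup_apply_hi hf, strand_cup hg hf]
  by_cases hglo : g u = .inl (lo i)
  · have hu : u = g (.inl (lo i)) := by rw [← hglo, hg]
    rw [hglo, followCup_lo, hu, followCup_apply_lo hf, strand_cup hg hf]
  by_cases hghi : g u = .inl (hi i)
  · have hu : u = g (.inl (hi i)) := by rw [← hghi, hg]
    rw [hghi, followCup_hi, hu, followCup_apply_hi hf, strand_cup hg hf]
  rw [followCup_of_ne hlo hhi, followCup_of_ne hglo hghi,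
    ← eMul_of_ne_of_ne hlo hhi hglo hghi, strand_eMul hg hf]

theorem eMul_left_cancel {g' : Bdry n → Bdry n} (hg' : Function.Involutive g')
    (hf' : ∀ x, g' x ≠ x)
    (hlo : g (.inl (lo i)) = g' (.inl (lo i))) (h : eMul i g = eMul i g') : g = g' := by
  have hhi : g (.inl (hi i)) = g' (.inl (hi i)) := by
    by_cases hc : g (.inl (lo i)) = .inl (hi i)
    · rw [← hc, hg, hlo, hg']
    · have hc' : g' (.inl (lo i)) ≠ .inl (hi i) := hlo ▸ hc
      calc g (.inl (hi i)) = eMul i g (g (.inl (lo i))) := by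
            rw [eMul_of_ne (hf _) hc, hg, followCup_lo]
        _ = eMul i g' (g' (.inl (lo i))) := by rw [h, hlo]
        _ = g' (.inl (hi i)) := by rw [eMul_of_ne (hf' _) hc', hg', followCup_lo]
  have hpartner : ∀ u, g u = g' u → ∀ x, g x = u ↔ g' x = u := fun u hu x => by
    rw [hg.eq_iff, hg'.eq_iff, hu]
  funext x
  by_cases hxlo : x = .inl (lo i)
  · rwa [hxlo]
  by_cases hxhi : x = .inl (hi i)
  · rwa [hxhi]
  by_cases hglo : g x = .inl (lo i)
  · rw [hglo, (hpartner _ hlo x).1 hglo]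
  by_cases hghi : g x = .inl (hi i)
  · rw [hghi, (hpartner _ hhi x).1 hghi]
  have hglo' : g' x ≠ .inl (lo i) := fun h' => hglo ((hpartner _ hlo x).2 h')
  have hghi' : g' x ≠ .inl (hi i) := fun h' => hghi ((hpartner _ hhi x).2 h')
  rw [← eMul_of_ne_of_ne hxlo hxhi hglo hghi, ← eMul_of_ne_of_ne hxlo hxhi hglo' hghi', h]

end Matching

section Stacking

variable {n : ℕ}

def embLower : Bdry n → Fin n ⊕ Bdry n := Sum.elim Sum.inl fun k => Sum.inr (Sum.inl k)

def embUpper : Bdry n → Fin n ⊕ Bdry n :=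
  Sum.elim (fun k => Sum.inr (Sum.inl k)) fun k => Sum.inr (Sum.inr k)

def embOuter : Bdry n → Fin n ⊕ Bdry n := Sum.elim Sum.inl fun k => Sum.inr (Sum.inr k)

def stackStep (D₁ D₂ : Bdry n → Bdry n → Prop) (p q : Fin n ⊕ Bdry n) : Prop :=
  (∃ a b, D₁ a b ∧ p = embLower a ∧ q = embLower b) ∨
  (∃ a b, D₂ a b ∧ p = embUpper a ∧ q = embUpper b)

theorem comp_iff (D₁ D₂ : Bdry n → Bdry n → Prop) (x y : Bdry n) :
    comp n D₁ D₂ x y ↔ x ≠ y ∧ Relation.EqvGen (stackStep D₁ D₂) (embOuter x) (embOuter y) :=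
  Iff.rfl

variable {i : Fin (n - 1)} {g : Bdry n → Bdry n} {R : Bdry n → Bdry n → Prop}

variable (i g) in
def layerStrand : Fin n ⊕ Bdry n → Sym2 (Bdry n)
  | .inl k => strand i g (.inl k)
  | .inr u => strand i g (followCup i g u)

theorem layerStrand_embOuter (x : Bdry n) : layerStrand i g (embOuter x) = strand i g x := by
  cases x <;> simp [embOuter, layerStrand]

theorem layerStrand_embUpper (u : Bdry n) :
    layerStrand i g (embUpper u) = strand i g (followCup i g u) := by
  cases u <;> rfl

theorem eqvGen_embUpper_apply (hR : ∀ u v, R u v ↔ g u = v) (u : Bdry n) :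
    Relation.EqvGen (stackStep (EDiag n i) R) (embUpper u) (embUpper (g u)) :=
  .rel _ _ (Or.inr ⟨u, g u, (hR u (g u)).2 rfl, rfl, rfl⟩)

theorem eqvGen_embOuter_embUpper {x : Bdry n} (hlo : x ≠ .inl (lo i)) (hhi : x ≠ .inl (hi i)) :
    Relation.EqvGen (stackStep (EDiag n i) R) (embOuter x) (embUpper x) := by
  cases x with
  | inl p =>
    have hstraight : EDiag n i (.inl p) (.inr p) :=
      .inr <| .inr <| .inr <| .inr ⟨p, fun h => hlo (congrArg _ h), fun h => hhi (congrArg _ h),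
        .inl ⟨rfl, rfl⟩⟩
    exact .rel _ _ (.inl ⟨_, _, hstraight, rfl, rfl⟩)
  | inr m => exact .refl _

variable (hg : Function.Involutive g) (hf : ∀ x, g x ≠ x)
include hg hf

theorem layerStrand_eq_of_eDiag {u v : Bdry n} (h : EDiag n i u v) :
    layerStrand i g (embLower u) = layerStrand i g (embLower v) := by
  rcases h with ⟨rfl, rfl⟩ | ⟨rfl, rfl⟩ | ⟨rfl, rfl⟩ | ⟨rfl, rfl⟩ |
    ⟨j, hjlo, hjhi, ⟨rfl, rfl⟩ | ⟨rfl, rfl⟩⟩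
  · show strand i g (.inl (lo i)) = strand i g (.inl (hi i))
    rw [← strand_eMul hg hf, eMul_lo]
  · show strand i g (.inl (hi i)) = strand i g (.inl (lo i))
    rw [← strand_eMul hg hf, eMul_hi]
  · show strand i g (followCup i g (.inl (lo i))) = strand i g (followCup i g (.inl (hi i)))
    rw [followCup_lo, followCup_hi, strand_cup hg hf]
  · show strand i g (followCup i g (.inl (hi i))) = strand i g (followCup i g (.inl (lo i)))
    rw [followCup_lo, followCup_hi, strand_cup hg hf]
  all_goals
    have hj : followCup i g (.inl j) = .inl j :=
      followCup_of_ne (fun h => hjlo (Sum.inl_injective h)) fun h => hjhi (Sum.inl_injective h)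
    simp [embLower, layerStrand, hj]

variable (hR : ∀ u v, R u v ↔ g u = v)
include hR

theorem layerStrand_eq_of_eqvGen {p q : Fin n ⊕ Bdry n}
    (h : Relation.EqvGen (stackStep (EDiag n i) R) p q) :
    layerStrand i g p = layerStrand i g q := by
  induction h with
  | rel _ _ hpq =>
    rcases hpq with ⟨u, v, huv, rfl, rfl⟩ | ⟨u, v, huv, rfl, rfl⟩
    · exact layerStrand_eq_of_eDiag hg hf huv
    · rw [layerStrand_embUpper, layerStrand_embUpper, ← (hR u v).1 huv]
      exact strand_followCup_apply hg hf u
  | refl => rfl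
  | symm _ _ _ ih => exact ih.symm
  | trans _ _ _ _ _ ih₁ ih₂ => exact ih₁.trans ih₂

theorem eqvGen_embUpper_followCup {z : Bdry n} (hlo : g z ≠ .inl (lo i))
    (hhi : g z ≠ .inl (hi i)) :
    Relation.EqvGen (stackStep (EDiag n i) R) (embUpper z) (embOuter (followCup i g z)) := by
  have hcup : Relation.EqvGen (stackStep (EDiag n i) R)
      (embUpper (.inl (lo i))) (embUpper (.inl (hi i))) :=
    .rel _ _ (.inl ⟨.inr (lo i), .inr (hi i), .inr (.inr (.inl ⟨rfl, rfl⟩)), rfl, rfl⟩)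
  by_cases hzlo : z = .inl (lo i)
  · subst hzlo
    have hghi : g (.inl (hi i)) ≠ .inl (lo i) := fun h => hhi (by rw [← h, hg])
    rw [followCup_lo]
    exact hcup.trans _ _ _ ((eqvGen_embUpper_apply hR _).trans _ _ _
      (.symm _ _ (eqvGen_embOuter_embUpper hghi (hf _))))
  by_cases hzhi : z = .inl (hi i)
  · subst hzhi
    have hglo : g (.inl (lo i)) ≠ .inl (hi i) := fun h => hlo (by rw [← h, hg])
    rw [followCup_hi]
    exact (Relation.EqvGen.symm _ _ hcup).trans _ _ _ ((eqvGen_embUpper_apply hR _).trans _ _ _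
      (.symm _ _ (eqvGen_embOuter_embUpper (hf _) hglo)))
  rw [followCup_of_ne hzlo hzhi]
  exact .symm _ _ (eqvGen_embOuter_embUpper hzlo hzhi)

theorem comp_eDiag_iff (x y : Bdry n) : comp n (EDiag n i) R x y ↔ eMul i g x = y := by
  rw [comp_iff]
  constructor
  · rintro ⟨hxy, hlink⟩
    have h := layerStrand_eq_of_eqvGen hg hf hR hlink
    rw [layerStrand_embOuter, layerStrand_embOuter] at h
    exact ((eq_or_eq_eMul_of_strand_eq h).resolve_left (Ne.symm hxy)).symm
  · rintro rfl
    refine ⟨(eMul_ne_self hg hf x).symm, ?_⟩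
    by_cases hlo : x = .inl (lo i)
    · subst hlo
      rw [eMul_lo]
      exact .rel _ _ (.inl ⟨_, _, .inl ⟨rfl, rfl⟩, rfl, rfl⟩)
    by_cases hhi : x = .inl (hi i)
    · subst hhi
      rw [eMul_hi]
      exact .rel _ _ (.inl ⟨_, _, .inr (.inl ⟨rfl, rfl⟩), rfl, rfl⟩)
    rw [eMul_of_ne hlo hhi]
    refine (eqvGen_embOuter_embUpper hlo hhi).trans _ _ _
      ((eqvGen_embUpper_apply hR x).trans _ _ _ (eqvGen_embUpper_followCup hg hf hR ?_ ?_)) <;>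
      rwa [hg]

end Stacking

section Words

variable {n : ℕ}

def wordMatching : List (Fin (n - 1)) → Bdry n → Bdry n
  | [] => Sum.swap
  | i :: l => eMul i (wordMatching l)

@[simp] theorem wordMatching_cons (i : Fin (n - 1)) (l : List (Fin (n - 1))) :
    wordMatching (i :: l) = eMul i (wordMatching l) := rfl

theorem wordMatching_involutive_and_ne_self (l : List (Fin (n - 1))) :
    Function.Involutive (wordMatching (n := n) l) ∧ ∀ x, wordMatching (n := n) l x ≠ x := by
  induction l with
  | nil => exact ⟨Sum.swap_swap, by rintro (p | p) h <;> cases h⟩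
  | cons i l ih => exact ⟨eMul_involutive ih.1 ih.2, eMul_ne_self ih.1 ih.2⟩

theorem wordMatching_involutive (l : List (Fin (n - 1))) :
    Function.Involutive (wordMatching (n := n) l) :=
  (wordMatching_involutive_and_ne_self l).1

theorem wordMatching_ne_self (l : List (Fin (n - 1))) (x : Bdry n) : wordMatching l x ≠ x :=
  (wordMatching_involutive_and_ne_self l).2 x

theorem idDiag_iff (x y : Bdry n) : IdDiag n x y ↔ Sum.swap x = y := by
  constructor
  · rintro ⟨j, ⟨rfl, rfl⟩ | ⟨rfl, rfl⟩⟩ <;> rfl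
  · rintro rfl
    cases x with
    | inl p => exact ⟨p, .inl ⟨rfl, rfl⟩⟩
    | inr p => exact ⟨p, .inr ⟨rfl, rfl⟩⟩

theorem wordDiag_iff (l : List (Fin (n - 1))) (x y : Bdry n) :
    wordDiag n l x y ↔ wordMatching l x = y := by
  induction l generalizing x y with
  | nil => exact idDiag_iff x y
  | cons i l ih =>
    exact comp_eDiag_iff (wordMatching_involutive l) (wordMatching_ne_self l) ih x y

theorem wordMatching_eq_of_wordDiag_iff {l l' : List (Fin (n - 1))}
    (h : ∀ x y, wordDiag n l x y ↔ wordDiag n l' x y) : wordMatching l = wordMatching l' :=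
  funext fun x => ((wordDiag_iff l' x _).1 ((h x _).1 ((wordDiag_iff l x _).2 rfl))).symm

end Words

section Runs

variable {n : ℕ}

def ipred (i : Fin (n - 1)) : Fin (n - 1) := ⟨i - 1, lt_of_le_of_lt (Nat.sub_le _ _) i.isLt⟩

@[simp] theorem val_ipred (i : Fin (n - 1)) : (ipred i : ℕ) = i - 1 := rfl

theorem hi_ipred {i : Fin (n - 1)} (h : 0 < (i : ℕ)) : hi (ipred i) = lo i :=
  Fin.ext (by simp only [val_hi, val_ipred, val_lo]; omega)

def runWord (a : Fin (n - 1) × Fin (n - 1)) : List (Fin (n - 1)) :=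
  (List.range ((a.1 : ℕ) - a.2 + 1)).map fun t =>
    ⟨a.1 - t, lt_of_le_of_lt (Nat.sub_le _ _) a.1.isLt⟩

def runsWord (L : List (Fin (n - 1) × Fin (n - 1))) : List (Fin (n - 1)) :=
  (L.map runWord).flatten

theorem jnfWord_eq_runsWord {r : ℕ} (I J : Fin r → Fin (n - 1)) :
    jnfWord n I J = runsWord (List.ofFn fun k => (I k, J k)) := by
  rw [runsWord, List.map_ofFn]
  rfl

theorem runWord_eq_cons {i j : Fin (n - 1)} (h : j ≤ i) :
    runWord (i, j) = i :: if j < i then runWord (ipred i, j) else [] := by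
  rw [runWord, List.range_succ_eq_map, List.map_cons, List.map_map]
  congr 1
  split_ifs with hlt
  · have hlen : (i : ℕ) - j = (ipred i : ℕ) - j + 1 := by simp only [val_ipred]; omega
    rw [runWord, hlen]
    refine List.map_congr_left fun t _ => Fin.ext ?_
    simp only [Function.comp_apply, Nat.succ_eq_add_one, val_ipred]
    omega
  · rw [show (i : ℕ) - j = 0 by omega, List.range_zero, List.map_nil]

/-- What is left of a normal form with first run `(i, j)` and further runs `L` after its first
generator `E_i`. -/
def peel (i j : Fin (n - 1)) (L : List (Fin (n - 1) × Fin (n - 1))) :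
    List (Fin (n - 1) × Fin (n - 1)) :=
  if j < i then (ipred i, j) :: L else L

theorem peel_of_lt {i j : Fin (n - 1)} (L : List (Fin (n - 1) × Fin (n - 1))) (h : j < i) :
    peel i j L = (ipred i, j) :: L := if_pos h

theorem peel_self (i : Fin (n - 1)) (L : List (Fin (n - 1) × Fin (n - 1))) : peel i i L = L :=
  if_neg (lt_irrefl i)

theorem peel_inj {i j : Fin (n - 1)} {L L' : List (Fin (n - 1) × Fin (n - 1))} :
    peel i j L = peel i j L' ↔ L = L' := by
  unfold peel
  split_ifs <;> simp

theorem mem_peel {i j : Fin (n - 1)} {L : List (Fin (n - 1) × Fin (n - 1))}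
    {a : Fin (n - 1) × Fin (n - 1)} : a ∈ peel i j L ↔ (j < i ∧ a = (ipred i, j)) ∨ a ∈ L := by
  unfold peel
  split_ifs with h <;> simp [h]

theorem runsWord_cons {i j : Fin (n - 1)} (L : List (Fin (n - 1) × Fin (n - 1))) (h : j ≤ i) :
    runsWord ((i, j) :: L) = i :: runsWord (peel i j L) := by
  unfold peel
  simp only [runsWord, List.map_cons, List.flatten_cons, runWord_eq_cons h]
  split_ifs <;> simp

def IsJonesNormal (L : List (Fin (n - 1) × Fin (n - 1))) : Prop :=
  L.Pairwise (fun a b => a.1 < b.1 ∧ a.2 < b.2) ∧ ∀ a ∈ L, a.2 ≤ a.1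

theorem isJonesNormal_cons {i j : Fin (n - 1)} {L : List (Fin (n - 1) × Fin (n - 1))} :
    IsJonesNormal ((i, j) :: L) ↔
      j ≤ i ∧ (∀ a ∈ L, i < a.1 ∧ j < a.2) ∧ IsJonesNormal L := by
  simp only [IsJonesNormal, List.pairwise_cons, List.forall_mem_cons]
  tauto

theorem isJonesNormal_ofFn {r : ℕ} {I J : Fin r → Fin (n - 1)} (hI : StrictMono I)
    (hJ : StrictMono J) (hJI : ∀ k, J k ≤ I k) :
    IsJonesNormal (List.ofFn fun k => (I k, J k)) :=
  ⟨List.pairwise_ofFn.2 fun _ _ h => ⟨hI h, hJ h⟩, by simpa [List.mem_ofFn] using hJI⟩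

theorem isJonesNormal_peel {i j : Fin (n - 1)} {L : List (Fin (n - 1) × Fin (n - 1))}
    (h : IsJonesNormal ((i, j) :: L)) : IsJonesNormal (peel i j L) := by
  obtain ⟨hji, hL, hN⟩ := isJonesNormal_cons.1 h
  unfold peel
  split_ifs with hlt
  · refine isJonesNormal_cons.2 ⟨?_, fun a ha => ⟨?_, (hL a ha).2⟩, hN⟩
    · rw [Fin.le_def, val_ipred]; omega
    · have := (hL a ha).1
      rw [Fin.lt_def, val_ipred]; omega
  · exact hN

@[elab_as_elim]
theorem IsJonesNormal.induction {motive : List (Fin (n - 1) × Fin (n - 1)) → Prop}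
    (nil : motive [])
    (cons : ∀ i j L, IsJonesNormal ((i, j) :: L) → motive (peel i j L) → motive ((i, j) :: L)) :
    ∀ {L}, IsJonesNormal L → motive L
  | [], _ => nil
  | (i, j) :: L, hL => cons i j L hL (IsJonesNormal.induction nil cons (isJonesNormal_peel hL))
termination_by L => (runsWord L).length
decreasing_by rw [runsWord_cons L (isJonesNormal_cons.1 hL).1, List.length_cons]; omega

end Runs

section NormalFormMatching

variable {n : ℕ} {i j : Fin (n - 1)} {L : List (Fin (n - 1) × Fin (n - 1))}

theorem wordMatching_runsWord_cons_lo (L : List (Fin (n - 1) × Fin (n - 1))) (h : j ≤ i) :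
    wordMatching (runsWord ((i, j) :: L)) (.inl (lo i)) = .inl (hi i) := by
  rw [runsWord_cons L h, wordMatching_cons, eMul_lo]

theorem wordMatching_runsWord_inl_of_lt_snd (hL : IsJonesNormal L) :
    ∀ p : Fin n, (∀ a ∈ L, (p : ℕ) < a.2) → wordMatching (runsWord L) (.inl p) = .inr p := by
  refine hL.induction (fun p _ => rfl) fun i j L hL ih p hp => ?_
  obtain ⟨hji, hL', -⟩ := isJonesNormal_cons.1 hL
  have hpj : (p : ℕ) < j := hp _ List.mem_cons_self
  have hpeel : ∀ a ∈ peel i j L, (p : ℕ) < a.2 := fun a ha => by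
    rcases mem_peel.1 ha with ⟨-, rfl⟩ | ha
    · exact hpj
    · have := (hL' a ha).2
      omega
  have hplo : (.inl p : Bdry n) ≠ .inl (lo i) := by simp [Fin.ext_iff]; omega
  have hphi : (.inl p : Bdry n) ≠ .inl (hi i) := by simp [Fin.ext_iff]; omega
  rw [runsWord_cons L hji, wordMatching_cons, eMul_of_ne hplo hphi, ih p hpeel, followCup_inr]

def IsRightOf (p : Fin n) : Bdry n → Prop
  | .inl q => p < q
  | .inr q => p ≤ q

theorem IsRightOf.mono {p q : Fin n} {y : Bdry n} (hpq : p ≤ q) (h : IsRightOf q y) :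
    IsRightOf p y := by
  cases y with
  | inl r => exact lt_of_le_of_lt hpq h
  | inr r => exact hpq.trans h

theorem isRightOf_wordMatching_runsWord (hL : IsJonesNormal L) :
    ∀ p : Fin n, (∀ a ∈ L, (p : ℕ) ≠ a.1 + 1) →
      IsRightOf p (wordMatching (runsWord L) (.inl p)) := by
  refine hL.induction (fun p _ => le_refl p) fun i j L hL ih p hp => ?_
  obtain ⟨hji, hL', -⟩ := isJonesNormal_cons.1 hL
  have hpi1 : (p : ℕ) ≠ i + 1 := hp _ List.mem_cons_self
  rw [runsWord_cons L hji, wordMatching_cons]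
  by_cases hpi : (p : ℕ) = i
  · rw [show p = lo i from Fin.ext hpi, eMul_lo]
    exact lo_lt_hi i
  have hpeel : ∀ a ∈ peel i j L, (p : ℕ) ≠ a.1 + 1 := fun a ha => by
    rcases mem_peel.1 ha with ⟨hlt, rfl⟩ | ha
    · simp only [val_ipred]; omega
    · exact hp a (List.mem_cons_of_mem _ ha)
  have hhipeel : ∀ a ∈ peel i j L, (hi i : ℕ) ≠ a.1 + 1 := fun a ha => by
    rcases mem_peel.1 ha with ⟨hlt, rfl⟩ | ha
    · simp only [val_hi, val_ipred]; omega
    · have := (hL' a ha).1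
      simp only [val_hi]; omega
  set g := wordMatching (runsWord (peel i j L))
  have ihp := ih p hpeel
  have ihhi := ih (hi i) hhipeel
  have hplo : (.inl p : Bdry n) ≠ .inl (lo i) := by simpa [Fin.ext_iff] using hpi
  have hphi : (.inl p : Bdry n) ≠ .inl (hi i) := by simpa [Fin.ext_iff] using hpi1
  rw [eMul_of_ne hplo hphi]
  by_cases hglo : g (.inl p) = .inl (lo i)
  · rw [hglo] at ihp
    rw [hglo, followCup_lo]
    exact ihhi.mono (ihp.trans (lo_lt_hi i)).le
  by_cases hghi : g (.inl p) = .inl (hi i)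
  · have hg : g (.inl (hi i)) = .inl p := by
      rw [← hghi]; exact wordMatching_involutive _ _
    rw [hghi] at ihp
    rw [hg] at ihhi
    exact absurd (lt_trans ihp ihhi) (lt_irrefl p)
  rwa [followCup_of_ne hglo hghi]

theorem fst_add_one_le_of_wordMatching_eq_inl (hL : IsJonesNormal ((i, j) :: L)) {p q : Fin n}
    (h : wordMatching (runsWord ((i, j) :: L)) (.inl p) = .inl q) (hpq : p < q) :
    (i : ℕ) + 1 ≤ q := by
  by_contra! hq
  obtain ⟨-, hL', -⟩ := isJonesNormal_cons.1 hL
  have hqS : ∀ a ∈ (i, j) :: L, (q : ℕ) ≠ a.1 + 1 := fun a ha => by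
    rcases List.mem_cons.1 ha with rfl | ha
    · show (q : ℕ) ≠ i + 1
      omega
    · have := (hL' a ha).1
      omega
  have hq' := isRightOf_wordMatching_runsWord hL q hqS
  rw [← h, wordMatching_involutive _ (.inl p)] at hq'
  exact absurd hq' (not_lt.2 hpq.le)

theorem snd_le_of_wordMatching_ne (hL : IsJonesNormal ((i, j) :: L)) {p : Fin n}
    (h : wordMatching (runsWord ((i, j) :: L)) (.inl p) ≠ .inr p) : (j : ℕ) ≤ p := by
  by_contra! hpj
  obtain ⟨-, hL', -⟩ := isJonesNormal_cons.1 hL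
  refine h (wordMatching_runsWord_inl_of_lt_snd hL p fun a ha => ?_)
  rcases List.mem_cons.1 ha with rfl | ha
  · exact hpj
  · have := (hL' a ha).2
    omega

theorem wordMatching_runsWord_inl_lo_snd_ne (hL : IsJonesNormal ((i, j) :: L)) :
    wordMatching (runsWord ((i, j) :: L)) (.inl (lo j)) ≠ .inr (lo j) := by
  obtain ⟨hji, -, -⟩ := isJonesNormal_cons.1 hL
  induction hk : (i : ℕ) - j generalizing i with
  | zero =>
    obtain rfl : i = j := le_antisymm (by omega) hji
    simp [wordMatching_runsWord_cons_lo L le_rfl]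
  | succ k ih =>
    have hlt : j < i := by omega
    have hP : IsJonesNormal ((ipred i, j) :: L) := peel_of_lt L hlt ▸ isJonesNormal_peel hL
    have hjp : j ≤ ipred i := (isJonesNormal_cons.1 hP).1
    have hjlo : (.inl (lo j) : Bdry n) ≠ .inl (lo i) := by simp [Fin.ext_iff]; omega
    have hjhi : (.inl (lo j) : Bdry n) ≠ .inl (hi i) := by simp [Fin.ext_iff]; omega
    have hhiS : ∀ a ∈ (ipred i, j) :: L, (hi i : ℕ) ≠ a.1 + 1 := fun a ha => by
      rcases mem_peel.1 ((peel_of_lt L hlt).symm ▸ ha) with ⟨-, rfl⟩ | ha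
      · simp only [val_hi, val_ipred]; omega
      · have := ((isJonesNormal_cons.1 hL).2.1 a ha).1
        simp only [val_hi]; omega
    have hright := isRightOf_wordMatching_runsWord hP (hi i) hhiS
    have hcap := wordMatching_runsWord_cons_lo L hjp
    rw [hi_ipred (by omega)] at hcap
    rw [runsWord_cons L hji, peel_of_lt L hlt, wordMatching_cons, eMul_of_ne hjlo hjhi]
    have hg := wordMatching_involutive (n := n) (runsWord ((ipred i, j) :: L))
    set g := wordMatching (runsWord ((ipred i, j) :: L))
    by_cases hglo : g (.inl (lo j)) = .inl (lo i)
    · rw [hglo, followCup_lo]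
      intro h
      rw [h] at hright
      exact absurd (Fin.le_def.1 hright) (by simp; omega)
    by_cases hghi : g (.inl (lo j)) = .inl (hi i)
    · rw [hghi, followCup_hi, ← hcap, hg]
      simp
    rw [followCup_of_ne hglo hghi]
    exact ih hP hjp (by simp only [val_ipred]; omega)

theorem wordMatching_runsWord_peel_lo (hL : IsJonesNormal ((i, j) :: L)) :
    wordMatching (runsWord (peel i j L)) (.inl (lo i)) =
      if j < i then .inl (lo (ipred i)) else .inr (lo i) := by
  obtain ⟨hji, hL', hN⟩ := isJonesNormal_cons.1 hL
  split_ifs with hlt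
  · have hcap := wordMatching_runsWord_cons_lo L (i := ipred i) (j := j)
      (by rw [Fin.le_def, val_ipred]; omega)
    rw [hi_ipred (by omega)] at hcap
    rw [peel_of_lt L hlt, ← hcap, wordMatching_involutive _ _]
  · obtain rfl : i = j := le_antisymm (not_lt.1 hlt) hji
    rw [peel_self]
    exact wordMatching_runsWord_inl_of_lt_snd hN _ fun a ha => (hL' a ha).2

theorem eq_of_wordMatching_runsWord_eq (hL : IsJonesNormal L) :
    ∀ L', IsJonesNormal L' → wordMatching (runsWord L) = wordMatching (runsWord L') → L = L' := by
  refine hL.induction ?_ fun i j L hL ih L' hL' h => ?_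
  · rintro (_ | ⟨⟨i', j'⟩, L'⟩) hL' h
    · rfl
    · have hcap := wordMatching_runsWord_cons_lo L' (isJonesNormal_cons.1 hL').1
      rw [← h] at hcap
      cases hcap
  obtain ⟨hji, -, -⟩ := isJonesNormal_cons.1 hL
  rcases L' with _ | ⟨⟨i', j'⟩, L'⟩
  · have hcap := wordMatching_runsWord_cons_lo L hji
    rw [h] at hcap
    cases hcap
  have hji' := (isJonesNormal_cons.1 hL').1
  obtain rfl : i = i' := by
    have h₁ := fst_add_one_le_of_wordMatching_eq_inl hL'
      (h ▸ wordMatching_runsWord_cons_lo L hji) (lo_lt_hi i)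
    have h₂ := fst_add_one_le_of_wordMatching_eq_inl hL
      (h ▸ wordMatching_runsWord_cons_lo L' hji') (lo_lt_hi i')
    simp only [val_hi] at h₁ h₂
    omega
  obtain rfl : j = j' := by
    have h₁ := snd_le_of_wordMatching_ne hL (h ▸ wordMatching_runsWord_inl_lo_snd_ne hL')
    have h₂ := snd_le_of_wordMatching_ne hL' (h ▸ wordMatching_runsWord_inl_lo_snd_ne hL)
    simp only [val_lo] at h₁ h₂
    omega
  rw [runsWord_cons L hji, runsWord_cons L' hji, wordMatching_cons, wordMatching_cons] at h
  have hpeel := eMul_left_cancel (wordMatching_involutive _) (wordMatching_ne_self _)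
    (wordMatching_involutive _) (wordMatching_ne_self _)
    (by rw [wordMatching_runsWord_peel_lo hL, wordMatching_runsWord_peel_lo hL']) h
  rw [peel_inj.1 (ih _ (isJonesNormal_peel hL') hpeel)]

end NormalFormMatching

/-- Uniqueness of the Jones normal form of a diagram: if two Jones normal form
products `(E_{i_1}⋯E_{j_1})⋯(E_{i_r}⋯E_{j_r})` and
`(E_{i'_1}⋯E_{j'_1})⋯(E_{i'_s}⋯E_{j'_s})` are equal as Temperley–Lieb
diagrams, then `r = s` and the index sequences coincide. -/
theorem jones_normal_form_unique {r s : ℕ}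
    (I J : Fin r → Fin (n - 1)) (I' J' : Fin s → Fin (n - 1))
    (hI : StrictMono I) (hJ : StrictMono J) (hJI : ∀ k, J k ≤ I k)
    (hI' : StrictMono I') (hJ' : StrictMono J') (hJI' : ∀ k, J' k ≤ I' k)
    (heq : ∀ x y : Bdry n,
      wordDiag n (jnfWord n I J) x y ↔ wordDiag n (jnfWord n I' J') x y) :
    r = s ∧ ∀ (k : Fin r) (k' : Fin s), (k : ℕ) = (k' : ℕ) →
      I k = I' k' ∧ J k = J' k' := by
  have hmatch := wordMatching_eq_of_wordDiag_iff heq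
  rw [jnfWord_eq_runsWord, jnfWord_eq_runsWord] at hmatch
  have hruns := eq_of_wordMatching_runsWord_eq (isJonesNormal_ofFn hI hJ hJI) _
    (isJonesNormal_ofFn hI' hJ' hJI') hmatch
  obtain rfl : r = s := by simpa using congrArg List.length hruns
  refine ⟨rfl, fun k k' hk => ?_⟩
  obtain rfl : k = k' := Fin.ext hk
  exact Prod.ext_iff.1 (congrFun (List.ofFn_injective hruns) k)

end TLDiag
end

section
/- The number of Jones normal forms (without \tau factor) on generators e_1,...,e_{n-1} equals the n-th Catalan number: the number of pairs of sequences i_1 < ... < i_r, j_1 < ... < j_r with j_k \le i_k \le n-1 for all k (including the empty pair r = 0) is binomial(2n,n)/(n+1). -/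
/-!
Encode a normal form as the list of pairs `(i_k, j_k)`, shifted to be `0`-based, so that for
`m = n - 1` generators the pairs satisfy `j_k ≤ i_k < m`. Cutting such a list at its first
diagonal pair `(t, t)` leaves a strict part (`j_k < i_k < t`) and an arbitrary normal form above
`t`; if there is no diagonal pair the whole list is strict. Lowering every `i_k` by one turns the
strict forms below `t + 1` into the normal forms below `t`. Writing `N m` and `S m` for the two
counts, this gives `N m = S m + ∑_{t < m} S t * N (m - t - 1)` with `S 0 = 1` and
`S (t + 1) = N t`, which is Catalan's recursion for `N m = catalan (m + 1)`.
-/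

open List

def IncreasingPairs {α β : Type*} [LT α] [LT β] (l : List (α × β)) : Prop :=
  l.Pairwise fun p q => p.1 < q.1 ∧ p.2 < q.2

theorem increasingPairs_map_prodMap_iff {α β γ δ : Type*} [LinearOrder α] [LinearOrder β]
    [Preorder γ] [Preorder δ] {f : α → γ} {g : β → δ} (hf : StrictMono f) (hg : StrictMono g)
    {l : List (α × β)} : IncreasingPairs (l.map (Prod.map f g)) ↔ IncreasingPairs l := by
  simp only [IncreasingPairs, pairwise_map, Prod.map_fst, Prod.map_snd, hf.lt_iff_lt,
    hg.lt_iff_lt]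

def tuplePairsEquiv (α β : Type*) [Preorder α] [Preorder β] (R : β → α → Prop) :
    {p : Σ r : ℕ, (Fin r → α) × (Fin r → β) //
        StrictMono p.2.1 ∧ StrictMono p.2.2 ∧ ∀ k, R (p.2.2 k) (p.2.1 k)} ≃
      {l : List (α × β) | IncreasingPairs l ∧ ∀ x ∈ l, R x.2 x.1} :=
  ((Equiv.sigmaCongrRight fun _ => (Equiv.arrowProdEquivProdArrow _ _ _).symm).trans
    equivSigmaTuple.symm).subtypeEquiv fun ⟨r, a, b⟩ => by
      change _ ↔ IncreasingPairs (ofFn fun k => (a k, b k)) ∧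
        ∀ x ∈ ofFn (fun k => (a k, b k)), R x.2 x.1
      simp only [IncreasingPairs, pairwise_ofFn, forall_mem_ofFn_iff, forall_and, and_assoc]
      rfl

theorem List.append_cons_inj_of_forall_not {α : Type*} {P : α → Prop} [DecidablePred P]
    {l₁ l₂ l₁' l₂' : List α} {x x' : α} (h : l₁ ++ x :: l₂ = l₁' ++ x' :: l₂')
    (hl₁ : ∀ a ∈ l₁, ¬P a) (hl₁' : ∀ a ∈ l₁', ¬P a) (hx : P x) (hx' : P x') :
    l₁ = l₁' ∧ x = x' ∧ l₂ = l₂' := by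
  obtain rfl : l₁ = l₁' := by
    have := congrArg (takeWhile fun a => !decide (P a)) h
    rwa [takeWhile_append_of_pos (by simpa using hl₁),
      takeWhile_append_of_pos (by simpa using hl₁'), takeWhile_cons_of_neg (by simpa using hx),
      takeWhile_cons_of_neg (by simpa using hx'), append_nil, append_nil] at this
  simpa using h

theorem catalan_eq_choose_div (n : ℕ) : catalan n = (2 * n).choose n / (n + 1) := by
  rw [catalan_eq_centralBinom_div, Nat.centralBinom_eq_two_mul_choose]

namespace JonesNormalForm

def normalForms (m : ℕ) : Set (List (ℕ × ℕ)) :=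
  {l | IncreasingPairs l ∧ ∀ p ∈ l, p.2 ≤ p.1 ∧ p.1 < m}

def strictNormalForms (m : ℕ) : Set (List (ℕ × ℕ)) :=
  {l | IncreasingPairs l ∧ ∀ p ∈ l, p.2 < p.1 ∧ p.1 < m}

theorem strictNormalForms_subset_normalForms (m : ℕ) : strictNormalForms m ⊆ normalForms m :=
  fun _ hl => ⟨hl.1, fun p hp => ⟨(hl.2 p hp).1.le, (hl.2 p hp).2⟩⟩

theorem normalForms_eq_image_val (m : ℕ) :
    normalForms m = map (Prod.map Fin.val Fin.val) ''
      {l : List (Fin m × Fin m) | IncreasingPairs l ∧ ∀ x ∈ l, x.2 ≤ x.1} := by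
  have hval (l : List (Fin m × Fin m)) :=
    increasingPairs_map_prodMap_iff (l := l) Fin.val_strictMono Fin.val_strictMono
  ext l
  constructor
  · rintro ⟨hl, hb⟩
    lift l to List (Fin m × Fin m) using fun p hp => ⟨(hb p hp).2, by have := hb p hp; omega⟩
    refine ⟨l, ⟨(hval l).1 hl, fun p hp => ?_⟩, rfl⟩
    simpa using (hb _ (mem_map_of_mem hp)).1
  · rintro ⟨l, ⟨hl, hb⟩, rfl⟩
    refine ⟨(hval l).2 hl, ?_⟩
    simp only [mem_map, forall_exists_index, and_imp, forall_apply_eq_imp_iff₂]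
    exact fun p hp => ⟨hb p hp, p.1.2⟩

theorem strictNormalForms_zero : strictNormalForms 0 = {[]} := by
  ext l
  simp only [strictNormalForms, Set.mem_ofPred_eq, Set.mem_singleton_iff, Nat.not_lt_zero,
    and_false, imp_false]
  refine ⟨fun ⟨_, h⟩ => eq_nil_iff_forall_not_mem.2 h, ?_⟩
  rintro rfl
  exact ⟨Pairwise.nil, fun _ => not_mem_nil⟩

theorem strictNormalForms_succ (m : ℕ) :
    strictNormalForms (m + 1) = map (Prod.map (· + 1) id) '' normalForms m := by
  have hsucc (l : List (ℕ × ℕ)) :=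
    increasingPairs_map_prodMap_iff (l := l) (strictMono_id.add_const 1) strictMono_id
  ext l
  constructor
  · rintro ⟨hl, hb⟩
    obtain ⟨l, rfl⟩ : l ∈ Set.range (map (Prod.map (· + 1) id)) := by
      rw [Set.range_list_map]
      refine fun p hp => ⟨(p.1 - 1, p.2), ?_⟩
      have := hb p hp
      ext <;> simp only [Prod.map_fst, Prod.map_snd, id_eq]
      omega
    refine ⟨l, ⟨(hsucc l).1 hl, fun p hp => ?_⟩, rfl⟩
    have := hb _ (mem_map_of_mem hp)
    simp only [Prod.map_fst, Prod.map_snd, id_eq] at this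
    omega
  · rintro ⟨l, ⟨hl, hb⟩, rfl⟩
    refine ⟨(hsucc l).2 hl, ?_⟩
    simp only [mem_map, forall_exists_index, and_imp, forall_apply_eq_imp_iff₂, Prod.map_fst,
      Prod.map_snd, id_eq]
    intro p hp
    have := hb p hp
    omega

def glue (t : ℕ) (l₁ l₂ : List (ℕ × ℕ)) : List (ℕ × ℕ) :=
  l₁ ++ (t, t) :: l₂.map (Prod.map (· + (t + 1)) (· + (t + 1)))

theorem diag_mem_glue {t : ℕ} {l₁ l₂ : List (ℕ × ℕ)} : (t, t) ∈ glue t l₁ l₂ :=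
  mem_append_right _ mem_cons_self

theorem glue_mem_normalForms {m t : ℕ} (ht : t < m) {l₁ l₂ : List (ℕ × ℕ)}
    (h₁ : l₁ ∈ strictNormalForms t) (h₂ : l₂ ∈ normalForms (m - t - 1)) :
    glue t l₁ l₂ ∈ normalForms m := by
  obtain ⟨hl₁, hb₁⟩ := h₁
  obtain ⟨hl₂, hb₂⟩ := h₂
  have hshift : StrictMono (· + (t + 1)) := strictMono_id.add_const (t + 1)
  refine ⟨?_, fun p hp => ?_⟩
  · rw [IncreasingPairs, glue, pairwise_append, pairwise_cons]
    refine ⟨hl₁, ⟨?_, (increasingPairs_map_prodMap_iff hshift hshift).2 hl₂⟩, ?_⟩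
    · simp only [mem_map, forall_exists_index, and_imp, forall_apply_eq_imp_iff₂, Prod.map_fst,
        Prod.map_snd]
      omega
    · intro a ha b hb
      have := hb₁ a ha
      simp only [mem_cons, mem_map] at hb
      rcases hb with rfl | ⟨q, -, rfl⟩ <;> simp only [Prod.map_fst, Prod.map_snd] <;> omega
  · simp only [glue, mem_append, mem_cons, mem_map] at hp
    rcases hp with hp | rfl | ⟨q, hq, rfl⟩
    · have := hb₁ p hp
      omega
    · exact ⟨le_rfl, ht⟩
    · have := hb₂ q hq
      simp only [Prod.map_fst, Prod.map_snd]
      omega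

theorem eq_of_glue_eq {t t' : ℕ} {l₁ l₂ l₁' l₂' : List (ℕ × ℕ)} (h₁ : ∀ p ∈ l₁, p.2 < p.1)
    (h₁' : ∀ p ∈ l₁', p.2 < p.1) (h : glue t l₁ l₂ = glue t' l₁' l₂') :
    t = t' ∧ l₁ = l₁' ∧ l₂ = l₂' := by
  obtain ⟨rfl, ht, hl₂⟩ := append_cons_inj_of_forall_not (P := fun p : ℕ × ℕ => p.1 = p.2) h
    (fun p hp => (h₁ p hp).ne') (fun p hp => (h₁' p hp).ne') rfl rfl
  obtain rfl : t = t' := congrArg Prod.fst ht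
  exact ⟨rfl, rfl, map_injective_iff.2 ((add_left_injective _).prodMap (add_left_injective _)) hl₂⟩

theorem exists_glue_eq {m : ℕ} {l : List (ℕ × ℕ)} (hl : l ∈ normalForms m)
    (hd : ∃ p ∈ l, p.1 = p.2) :
    ∃ t < m, ∃ l₁ ∈ strictNormalForms t, ∃ l₂ ∈ normalForms (m - t - 1), glue t l₁ l₂ = l := by
  obtain ⟨x, hx⟩ : ∃ x, l.find? (fun p => p.1 = p.2) = some x :=
    Option.isSome_iff_exists.1 (find?_isSome.2 (by simpa using hd))
  obtain ⟨hxd, l₁, rest, rfl, hl₁⟩ := find?_eq_some_iff_append.1 hx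
  obtain ⟨t, _⟩ := x
  obtain rfl : t = _ := by simpa using hxd
  obtain ⟨hinc, hb⟩ := hl
  rw [IncreasingPairs, pairwise_append, pairwise_cons] at hinc
  obtain ⟨hinc₁, ⟨hrest, hinc_rest⟩, hlt⟩ := hinc
  have hshift : StrictMono (· + (t + 1)) := strictMono_id.add_const (t + 1)
  obtain ⟨l₂, rfl⟩ : rest ∈ Set.range (map (Prod.map (· + (t + 1)) (· + (t + 1)))) := by
    rw [Set.range_list_map]
    refine fun p hp => ⟨(p.1 - (t + 1), p.2 - (t + 1)), ?_⟩
    have := hrest p hp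
    ext <;> simp only [Prod.map_fst, Prod.map_snd] <;> omega
  refine ⟨t, ?_, l₁, ⟨hinc₁, fun p hp => ?_⟩, l₂,
    ⟨(increasingPairs_map_prodMap_iff hshift hshift).1 hinc_rest, fun p hp => ?_⟩, rfl⟩
  · exact (hb (t, t) (mem_append_right _ mem_cons_self)).2
  · have h1 := hb p (mem_append_left _ hp)
    have h2 := hl₁ p hp
    have h3 := hlt p hp (t, t) mem_cons_self
    simp only [Bool.not_eq_true', decide_eq_false_iff_not] at h2
    omega
  · have := hb _ (mem_append_right _ (mem_cons_of_mem _ (mem_map_of_mem hp)))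
    simp only [Prod.map_fst, Prod.map_snd] at this
    omega

def normalFormsOfSplit (m : ℕ) :
    strictNormalForms m ⊕ (Σ t : Fin m, strictNormalForms t × normalForms (m - t - 1)) →
      normalForms m
  | .inl l => Set.inclusion (strictNormalForms_subset_normalForms m) l
  | .inr ⟨t, l₁, l₂⟩ => ⟨glue t l₁ l₂, glue_mem_normalForms t.2 l₁.2 l₂.2⟩

theorem normalFormsOfSplit_injective (m : ℕ) : Function.Injective (normalFormsOfSplit m) := by
  rintro (l | ⟨t, l₁, l₂⟩) (l' | ⟨t', l₁', l₂'⟩) h <;>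
    simp only [normalFormsOfSplit, Subtype.ext_iff] at h
  · rw [Subtype.ext h]
  · exact absurd (l.2.2 _ (h ▸ diag_mem_glue)).1 (lt_irrefl _)
  · exact absurd (l'.2.2 _ (h ▸ diag_mem_glue)).1 (lt_irrefl _)
  · obtain ⟨ht, hl₁, hl₂⟩ :=
      eq_of_glue_eq (fun p hp => (l₁.2.2 p hp).1) (fun p hp => (l₁'.2.2 p hp).1) h
    obtain rfl := Fin.ext ht
    rw [Subtype.ext hl₁, Subtype.ext hl₂]

theorem normalFormsOfSplit_surjective (m : ℕ) : Function.Surjective (normalFormsOfSplit m) := by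
  rintro ⟨l, hl⟩
  by_cases hd : ∃ p ∈ l, p.1 = p.2
  · obtain ⟨t, ht, l₁, h₁, l₂, h₂, rfl⟩ := exists_glue_eq hl hd
    exact ⟨.inr ⟨⟨t, ht⟩, ⟨l₁, h₁⟩, ⟨l₂, h₂⟩⟩, rfl⟩
  · push Not at hd
    exact ⟨.inl ⟨l, hl.1, fun p hp => ⟨(hl.2 p hp).1.lt_of_ne (hd p hp).symm, (hl.2 p hp).2⟩⟩, rfl⟩

noncomputable def normalFormsEquiv (m : ℕ) :
    strictNormalForms m ⊕ (Σ t : Fin m, strictNormalForms t × normalForms (m - t - 1)) ≃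
      normalForms m :=
  .ofBijective _ ⟨normalFormsOfSplit_injective m, normalFormsOfSplit_surjective m⟩

theorem normalForms_finite (m : ℕ) : (normalForms m).Finite := by
  induction m using Nat.strong_induction_on with
  | _ m ih =>
  have hstrict : ∀ t ≤ m, Finite (strictNormalForms t) := by
    rintro (_ | t) ht
    · rw [strictNormalForms_zero]
      infer_instance
    · rw [strictNormalForms_succ]
      exact ((ih t (by omega)).image _).to_subtype
  have := hstrict m le_rfl
  have := fun t : Fin m => hstrict t t.2.le
  have := fun t : Fin m => (ih (m - t - 1) (by omega)).to_subtype
  exact Set.finite_coe_iff.1 (.of_equiv _ (normalFormsEquiv m))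

theorem card_normalForms (m : ℕ) : Nat.card (normalForms m) = catalan (m + 1) := by
  induction m using Nat.strong_induction_on with
  | _ m ih =>
  have hstrict : ∀ t ≤ m, Nat.card (strictNormalForms t) = catalan t := by
    rintro (_ | t) ht
    · simp [strictNormalForms_zero]
    · rw [strictNormalForms_succ, Nat.card_image_of_injective
        (map_injective_iff.2 ((add_left_injective 1).prodMap Function.injective_id)),
        ih t (by omega)]
  have hupper : ∀ t < m, Nat.card (normalForms (m - t - 1)) = catalan (m - t) := by
    intro t ht
    rw [ih _ (by omega), Nat.sub_add_cancel (by omega)]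
  have := fun t => (normalForms_finite t).to_subtype
  have := fun t =>
    ((normalForms_finite t).subset (strictNormalForms_subset_normalForms t)).to_subtype
  rw [← Nat.card_congr (normalFormsEquiv m), Nat.card_sum, Nat.card_sigma, catalan_succ,
    Fin.sum_univ_castSucc, add_comm]
  simp only [Nat.card_prod, Fin.val_castSucc, Fin.val_last, Nat.sub_self, catalan_zero, mul_one]
  rw [hstrict m le_rfl]
  congr 1
  exact Finset.sum_congr rfl fun t _ => by rw [hstrict t t.2.le, hupper t t.2]

end JonesNormalForm

/-- The number of Jones normal forms (without `τ` factor) on the generators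
`e_1, …, e_{n-1}` — i.e. the number of data `r ≥ 0` together with sequences
`i_1 < ⋯ < i_r` and `j_1 < ⋯ < j_r` in `{1, …, n-1}` (encoded as `Fin (n-1)`)
with `j_k ≤ i_k` for all `k`, including the empty one — equals the `n`-th
Catalan number `(2n).choose n / (n+1)`. -/
theorem card_jones_normal_forms (n : ℕ) :
    Nat.card {p : Σ r : ℕ, (Fin r → Fin (n - 1)) × (Fin r → Fin (n - 1)) //
        StrictMono p.2.1 ∧ StrictMono p.2.2 ∧ ∀ k, p.2.2 k ≤ p.2.1 k} =
      (2 * n).choose n / (n + 1) := by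
  rw [Nat.card_congr (tuplePairsEquiv (Fin (n - 1)) (Fin (n - 1)) (· ≤ ·)),
    ← Nat.card_image_of_injective
      (map_injective_iff.2 (Fin.val_injective.prodMap Fin.val_injective)),
    ← JonesNormalForm.normalForms_eq_image_val, JonesNormalForm.card_normalForms,
    ← catalan_eq_choose_div]
  cases n <;> simp [catalan_one]
end

section
/- Given a rewriting system where rewriting is compatible with contexts, if every critical pair (minimal overlap of two rules) is confluent, then every local branching is confluent, i.e. the system is locally confluent. -/
/-!
Induction on the length of the branched word. Trivial branchings and branchings with disjoint
redexes close in at most one step on each side. Any other branching is an overlap; either it is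
critical, and joinable by hypothesis, or it strictly contains a smaller overlap, which is joinable
by induction, and contexts carry the common reduct back to the original branching.
-/

namespace CriticalPairs

variable {α : Type*} (R : List α → List α → Prop)

/-- One rewriting step: a rule applied inside an arbitrary context. -/
def Step (x y : List α) : Prop :=
  ∃ u v a b, R a b ∧ x = u ++ a ++ v ∧ y = u ++ b ++ v

/-- A local branching: two one-step rewrites from the same word. -/
def Branching (t : List α × List α × List α) : Prop :=
  Step R t.1 t.2.1 ∧ Step R t.1 t.2.2

/-- The order `⊑` on branchings generated by embedding into contexts:
`(a,b,c) ⊑ (uav, ubv, ucv)`. -/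
def Sqle (t t' : List α × List α × List α) : Prop :=
  ∃ u v, t'.1 = u ++ t.1 ++ v ∧ t'.2.1 = u ++ t.2.1 ++ v ∧ t'.2.2 = u ++ t.2.2 ++ v

/-- An overlap: a branching that is neither trivial (both results equal) nor
has disjoint redexes (of the form `(ab, a'b, ab')` with steps `a → a'`,
`b → b'`). -/
def Overlap (t : List α × List α × List α) : Prop :=
  Branching R t ∧ ¬ t.2.1 = t.2.2 ∧
    ¬ ∃ a b a' b', Step R a a' ∧ Step R b b' ∧
        t = (a ++ b, a' ++ b, a ++ b')

/-- A critical pair: a minimal overlap for the order `⊑`. -/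
def CriticalPair (t : List α × List α × List α) : Prop :=
  Overlap R t ∧ ¬ ∃ t', Overlap R t' ∧ Sqle t' t ∧ t' ≠ t

open Relation

variable {R}

lemma Step.append_append (u v : List α) {a b : List α} (h : Step R a b) :
    Step R (u ++ a ++ v) (u ++ b ++ v) := by
  obtain ⟨p, q, x, y, hr, rfl, rfl⟩ := h
  exact ⟨u ++ p, q ++ v, x, y, hr, by simp, by simp⟩

lemma reflTransGen_step_append_append (u v : List α) {a b : List α}
    (h : ReflTransGen (Step R) a b) :
    ReflTransGen (Step R) (u ++ a ++ v) (u ++ b ++ v) :=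
  ReflTransGen.lift (fun x => u ++ x ++ v) (fun _ _ => Step.append_append u v) _ _ h

lemma join_of_disjoint_redexes {a a' b b' : List α} (ha : Step R a a') (hb : Step R b b') :
    Join (ReflTransGen (Step R)) (a' ++ b) (a ++ b') := by
  refine ⟨a' ++ b', .single ?_, .single ?_⟩
  · simpa using hb.append_append a' []
  · simpa using ha.append_append [] b'

lemma Sqle.join {t t' : List α × List α × List α} (h : Sqle t t')
    (ht : Join (ReflTransGen (Step R)) t.2.1 t.2.2) :
    Join (ReflTransGen (Step R)) t'.2.1 t'.2.2 := by
  obtain ⟨u, v, -, h₁, h₂⟩ := h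
  obtain ⟨d, hd₁, hd₂⟩ := ht
  exact ⟨u ++ d ++ v, h₁ ▸ reflTransGen_step_append_append u v hd₁,
    h₂ ▸ reflTransGen_step_append_append u v hd₂⟩

lemma Sqle.length_lt_of_ne {t t' : List α × List α × List α} (h : Sqle t t') (hne : t ≠ t') :
    t.1.length < t'.1.length := by
  obtain ⟨u, v, h₀, h₁, h₂⟩ := h
  by_contra hlen
  have huv : u = [] ∧ v = [] := by
    simp only [h₀, List.length_append] at hlen
    exact ⟨List.eq_nil_of_length_eq_zero (by omega), List.eq_nil_of_length_eq_zero (by omega)⟩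
  obtain ⟨rfl, rfl⟩ := huv
  simp only [List.nil_append, List.append_nil] at h₀ h₁ h₂
  exact hne (Prod.ext h₀.symm (Prod.ext h₁.symm h₂.symm))

lemma join_of_overlap
    (hcp : ∀ t, CriticalPair R t → Join (ReflTransGen (Step R)) t.2.1 t.2.2)
    (t : List α × List α × List α) (ht : Overlap R t) :
    Join (ReflTransGen (Step R)) t.2.1 t.2.2 := by
  by_cases hcrit : CriticalPair R t
  · exact hcp t hcrit
  obtain ⟨t', ht', hle, hne⟩ : ∃ t', Overlap R t' ∧ Sqle t' t ∧ t' ≠ t := by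
    by_contra hmin
    exact hcrit ⟨ht, hmin⟩
  exact hle.join (join_of_overlap hcp t' ht')
termination_by t.1.length
decreasing_by exact hle.length_lt_of_ne hne

/-- Critical pair lemma: if every critical pair of the rewriting system is
confluent, then the system is locally confluent. -/
theorem locally_confluent_of_critical_pairs_confluent
    (hcp : ∀ t, CriticalPair R t →
      ∃ d, Relation.ReflTransGen (Step R) t.2.1 d ∧
           Relation.ReflTransGen (Step R) t.2.2 d) :
    ∀ w b c, Step R w b → Step R w c →
      ∃ d, Relation.ReflTransGen (Step R) b d ∧
           Relation.ReflTransGen (Step R) c d := by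
  intro w b c hb hc
  by_cases htriv : b = c
  · exact ⟨b, .refl, htriv ▸ .refl⟩
  by_cases hdisj : ∃ a b₀ a' b₀', Step R a a' ∧ Step R b₀ b₀' ∧
      ((w, b, c) : List α × List α × List α) = (a ++ b₀, a' ++ b₀, a ++ b₀')
  · obtain ⟨a, b₀, a', b₀', ha, hb₀, heq⟩ := hdisj
    simp only [Prod.mk.injEq] at heq
    obtain ⟨-, rfl, rfl⟩ := heq
    exact join_of_disjoint_redexes ha hb₀
  exact join_of_overlap hcp (w, b, c) ⟨⟨hb, hc⟩, htriv, hdisj⟩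

end CriticalPairs
end
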